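/- arXiv:math/0510526 — 11 statements merged into one kernel-verified Lean document; each statement's English description precedes it below -/
import Mathlib

section
/- Let P, Q : ℝ² → ℝ be continuously differentiable and everywhere positive, and set K(x,y) = log(Q(x,y)/P(x,y)). If y : J → ℝ is a differentiable function on an open interval J satisfying y'(x) = Q(x,y(x))/P(x,y(x)) for all x ∈ J, then y is twice differentiable on J and satisfies the second-order equation y''(x) = K_y(x,y(x))·(y'(x))² + K_x(x,y(x))·y'(x) for all x ∈ J. -/
/-!
Along a solution, `y' = F (x, y x)` with `F = Q / P`, so the chain rule gives
`y'' = F_x + F_y · F`. Since `K = log F`, we have `∇K = ∇F / F`, and substituting `F = y'`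
turns `F_x + F_y · F` into `K_y · y'² + K_x · y'`.
-/

theorem hasDerivAt_deriv_of_forall_hasDerivAt {F : ℝ × ℝ → ℝ} {F' : ℝ × ℝ →L[ℝ] ℝ}
    {J : Set ℝ} (hJ : IsOpen J) {y : ℝ → ℝ} (hy : ∀ x ∈ J, HasDerivAt y (F (x, y x)) x)
    {x : ℝ} (hx : x ∈ J) (hF : HasFDerivAt F F' (x, y x)) :
    HasDerivAt (deriv y) (F' (1, F (x, y x))) x := by
  have hcurve : HasDerivAt (fun t => (t, y t)) ((1 : ℝ), F (x, y x)) x :=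
    (hasDerivAt_id x).prodMk (hy x hx)
  have hderiv_eq : deriv y =ᶠ[nhds x] fun t => F (t, y t) := by
    filter_upwards [hJ.mem_nhds hx] with t ht
    exact (hy t ht).deriv
  exact (hF.comp_hasDerivAt x hcurve).congr_of_eventuallyEq hderiv_eq

theorem ContinuousLinearMap.apply_one_prod_eq_inv_smul {L : ℝ × ℝ →L[ℝ] ℝ} {c : ℝ}
    (hc : c ≠ 0) :
    L (1, c) = (c⁻¹ • L) (0, 1) * c ^ 2 + (c⁻¹ • L) (1, 0) * c := by
  have hsplit : L (1, c) = L (1, 0) + c * L (0, 1) := by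
    rw [← smul_eq_mul, ← L.map_smul, ← map_add]
    simp
  rw [hsplit, smul_apply, smul_apply, smul_eq_mul, smul_eq_mul]
  field_simp
  ring

theorem stmt_1_general (P Q : ℝ × ℝ → ℝ) (hP : ContDiff ℝ 1 P) (hQ : ContDiff ℝ 1 Q)
    (hPpos : ∀ p, 0 < P p) (hQpos : ∀ p, 0 < Q p)
    (K : ℝ × ℝ → ℝ) (hK : ∀ p, K p = Real.log (Q p / P p))
    (J : Set ℝ) (hJ : IsOpen J)
    (y : ℝ → ℝ)
    (hy : ∀ x ∈ J, HasDerivAt y (Q (x, y x) / P (x, y x)) x) :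
    ∀ x ∈ J, ∃ y2 : ℝ,
      HasDerivAt (deriv y) y2 x ∧
      y2 = fderiv ℝ K (x, y x) (0, 1) * (deriv y x) ^ 2
            + fderiv ℝ K (x, y x) (1, 0) * deriv y x := by
  intro x hx
  set F : ℝ × ℝ → ℝ := fun p => Q p / P p
  have hF : Differentiable ℝ F :=
    (hQ.div hP fun p => (hPpos p).ne').differentiable one_ne_zero
  have hFne : F (x, y x) ≠ 0 := (div_pos (hQpos _) (hPpos _)).ne'
  have hK' : fderiv ℝ K (x, y x) = (F (x, y x))⁻¹ • fderiv ℝ F (x, y x) := by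
    rw [funext hK]
    exact ((hF _).hasFDerivAt.log hFne).fderiv
  refine ⟨_, hasDerivAt_deriv_of_forall_hasDerivAt (F := F) hJ hy hx (hF _).hasFDerivAt, ?_⟩
  rw [(hy x hx).deriv, hK']
  exact ContinuousLinearMap.apply_one_prod_eq_inv_smul hFne

/-- If `y' = Q(x,y)/P(x,y)` with `P, Q` continuously differentiable and
positive, and `K = log(Q/P)`, then `y'' = K_y·(y')² + K_x·y'`. -/
theorem stmt_1 (P Q : ℝ × ℝ → ℝ) (hP : ContDiff ℝ 1 P) (hQ : ContDiff ℝ 1 Q)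
    (hPpos : ∀ p, 0 < P p) (hQpos : ∀ p, 0 < Q p)
    (K : ℝ × ℝ → ℝ) (hK : ∀ p, K p = Real.log (Q p / P p))
    (J : Set ℝ) (hJ : IsOpen J) (hJconn : IsPreconnected J)
    (y : ℝ → ℝ)
    (hy : ∀ x ∈ J, HasDerivAt y (Q (x, y x) / P (x, y x)) x) :
    ∀ x ∈ J, ∃ y2 : ℝ,
      HasDerivAt (deriv y) y2 x ∧
      y2 = fderiv ℝ K (x, y x) (0, 1) * (deriv y x) ^ 2
            + fderiv ℝ K (x, y x) (1, 0) * deriv y x :=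
  stmt_1_general P Q hP hQ hPpos hQpos K hK J hJ y hy
end

section
/- Let P, Q : ℝ² → ℝ be continuously differentiable and everywhere positive, and set K(x,y) = log(Q(x,y)/P(x,y)). Let x, y : I → ℝ be twice differentiable on an open interval I with x'(s) ≠ 0 for all s, satisfying P(x,y)·x''(s) = (P_x·x' + P_y·y')·x'(s) and Q(x,y)·y''(s) = (Q_x·x' + Q_y·y')·y'(s) (all coefficients evaluated at (x(s),y(s))). If g : J → ℝ is a twice differentiable function on an open interval J with g(x(s)) = y(s) for all s ∈ I, then for every s ∈ I one has g''(x(s)) = K_y(x(s),y(s))·(g'(x(s)))² + K_x(x(s),y(s))·g'(x(s)). -/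
/-!
Writing `y = g ∘ x`, the chain rule gives `y' = g'(x) x'` and `y'' = g''(x) x'² + g'(x) x''`.
Dividing the two equations of the system by `P` and `Q` respectively, and substituting these
expressions, the terms in `x''` combine into `(Q_x/Q - P_x/P) g' + (Q_y/Q - P_y/P) g'²` times
`x'²`, and `Q_•/Q - P_•/P` are exactly the partial derivatives of `K = log Q - log P`.
Cancelling `x'² ≠ 0` gives the equation for `g''`.
-/

open Filter Set

theorem HasFDerivAt.log_div {E : Type*} [NormedAddCommGroup E] [NormedSpace ℝ E]
    {P Q : E → ℝ} {P' Q' : E →L[ℝ] ℝ} {p : E} (hP : HasFDerivAt P P' p) (hQ : HasFDerivAt Q Q' p)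
    (hPp : P p ≠ 0) (hQp : Q p ≠ 0) :
    HasFDerivAt (fun q => Real.log (Q q / P q)) ((Q p)⁻¹ • Q' - (P p)⁻¹ • P') p := by
  have hne : ∀ᶠ q in nhds p, P q ≠ 0 ∧ Q q ≠ 0 :=
    (hP.continuousAt.eventually_ne hPp).and (hQ.continuousAt.eventually_ne hQp)
  refine ((hQ.log hQp).sub (hP.log hPp)).congr_of_eventuallyEq ?_
  filter_upwards [hne] with q hq
  exact Real.log_div hq.2 hq.1

theorem HasDerivAt.eq_of_eqOn {f g : ℝ → ℝ} {a b s : ℝ} {I : Set ℝ} (hI : IsOpen I) (hs : s ∈ I)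
    (hf : HasDerivAt f a s) (hg : HasDerivAt g b s) (hfg : EqOn f g I) : a = b :=
  hf.unique (hg.congr_of_eventuallyEq (eventuallyEq_of_mem (hI.mem_nhds hs) hfg))

section Graph

variable {I J : Set ℝ} {x y x' y' x'' y'' g g' g'' : ℝ → ℝ}

theorem deriv_eq_of_comp_eqOn (hI : IsOpen I) (hx : ∀ s ∈ I, HasDerivAt x (x' s) s)
    (hy : ∀ s ∈ I, HasDerivAt y (y' s) s) (hmem : ∀ s ∈ I, x s ∈ J)
    (hg : ∀ t ∈ J, HasDerivAt g (g' t) t) (hgy : ∀ s ∈ I, g (x s) = y s) :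
    EqOn (fun s => g' (x s) * x' s) y' I := fun s hs =>
  ((hg (x s) (hmem s hs)).comp s (hx s hs)).eq_of_eqOn hI hs (hy s hs) hgy

theorem secondDeriv_eq_of_comp_eqOn (hI : IsOpen I) (hx : ∀ s ∈ I, HasDerivAt x (x' s) s)
    (hy : ∀ s ∈ I, HasDerivAt y (y' s) s) (hx' : ∀ s ∈ I, HasDerivAt x' (x'' s) s)
    (hy' : ∀ s ∈ I, HasDerivAt y' (y'' s) s) (hmem : ∀ s ∈ I, x s ∈ J)
    (hg : ∀ t ∈ J, HasDerivAt g (g' t) t) (hg' : ∀ t ∈ J, HasDerivAt g' (g'' t) t)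
    (hgy : ∀ s ∈ I, g (x s) = y s) :
    ∀ s ∈ I, g'' (x s) * x' s ^ 2 + g' (x s) * x'' s = y'' s := by
  intro s hs
  have hgx : HasDerivAt (fun u => g' (x u) * x' u) (g'' (x s) * x' s * x' s + g' (x s) * x'' s) s :=
    ((hg' (x s) (hmem s hs)).comp s (hx s hs)).mul (hx' s hs)
  rw [← hgx.eq_of_eqOn hI hs (hy' s hs) (deriv_eq_of_comp_eqOn hI hx hy hmem hg hgy)]
  ring

end Graph

theorem graph_ode_of_curve_ode {P Q Px Py Qx Qy a b a' b' c c' : ℝ} (hP : P ≠ 0) (hQ : Q ≠ 0)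
    (ha : a ≠ 0) (h₁ : P * a' = (Px * a + Py * b) * a) (h₂ : Q * b' = (Qx * a + Qy * b) * b)
    (hb : c * a = b) (hb' : c' * a ^ 2 + c * a' = b') :
    c' = (Qy / Q - Py / P) * c ^ 2 + (Qx / Q - Px / P) * c := by
  subst hb hb'
  field_simp
  refine mul_right_cancel₀ (pow_ne_zero 2 ha) ?_
  linear_combination P * h₂ - Q * c * h₁

theorem stmt_2_general (P Q : ℝ × ℝ → ℝ) (hP : ContDiff ℝ 1 P) (hQ : ContDiff ℝ 1 Q)
    (hPpos : ∀ p, 0 < P p) (hQpos : ∀ p, 0 < Q p)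
    (K : ℝ × ℝ → ℝ) (hK : ∀ p, K p = Real.log (Q p / P p))
    (I : Set ℝ) (hI : IsOpen I)
    (J : Set ℝ)
    (x y x' y' x'' y'' : ℝ → ℝ)
    (hx : ∀ s ∈ I, HasDerivAt x (x' s) s)
    (hy : ∀ s ∈ I, HasDerivAt y (y' s) s)
    (hx' : ∀ s ∈ I, HasDerivAt x' (x'' s) s)
    (hy' : ∀ s ∈ I, HasDerivAt y' (y'' s) s)
    (hx0 : ∀ s ∈ I, x' s ≠ 0)
    (heq1 : ∀ s ∈ I, P (x s, y s) * x'' s =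
      (fderiv ℝ P (x s, y s) (1, 0) * x' s
        + fderiv ℝ P (x s, y s) (0, 1) * y' s) * x' s)
    (heq2 : ∀ s ∈ I, Q (x s, y s) * y'' s =
      (fderiv ℝ Q (x s, y s) (1, 0) * x' s
        + fderiv ℝ Q (x s, y s) (0, 1) * y' s) * y' s)
    (g g' g'' : ℝ → ℝ)
    (hmem : ∀ s ∈ I, x s ∈ J)
    (hg : ∀ t ∈ J, HasDerivAt g (g' t) t)
    (hg' : ∀ t ∈ J, HasDerivAt g' (g'' t) t)
    (hgy : ∀ s ∈ I, g (x s) = y s) :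
    ∀ s ∈ I, g'' (x s) =
      fderiv ℝ K (x s, y s) (0, 1) * (g' (x s)) ^ 2
        + fderiv ℝ K (x s, y s) (1, 0) * g' (x s) := by
  intro s hs
  set p := (x s, y s)
  have hKp : HasFDerivAt K ((Q p)⁻¹ • fderiv ℝ Q p - (P p)⁻¹ • fderiv ℝ P p) p := by
    rw [funext hK]
    exact HasFDerivAt.log_div (hP.differentiable one_ne_zero p).hasFDerivAt
      (hQ.differentiable one_ne_zero p).hasFDerivAt (hPpos p).ne' (hQpos p).ne'
  simp only [hKp.fderiv, sub_apply, smul_apply,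
    smul_eq_mul, inv_mul_eq_div]
  exact graph_ode_of_curve_ode (hPpos p).ne' (hQpos p).ne' (hx0 s hs) (heq1 s hs) (heq2 s hs)
    (deriv_eq_of_comp_eqOn hI hx hy hmem hg hgy hs)
    (secondDeriv_eq_of_comp_eqOn hI hx hy hx' hy' hmem hg hg' hgy s hs)

/-- If `(x(s), y(s))` solves the second-order system (8) with `x'(s) ≠ 0`,
and `g` is a twice differentiable function with `g(x(s)) = y(s)`, then `g` satisfies
`g'' = K_y·(g')² + K_x·g'` along the curve, where `K = log(Q/P)`. -/
theorem stmt_2 (P Q : ℝ × ℝ → ℝ) (hP : ContDiff ℝ 1 P) (hQ : ContDiff ℝ 1 Q)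
    (hPpos : ∀ p, 0 < P p) (hQpos : ∀ p, 0 < Q p)
    (K : ℝ × ℝ → ℝ) (hK : ∀ p, K p = Real.log (Q p / P p))
    (I : Set ℝ) (hI : IsOpen I) (hIconn : IsPreconnected I)
    (J : Set ℝ) (hJ : IsOpen J) (hJconn : IsPreconnected J)
    (x y x' y' x'' y'' : ℝ → ℝ)
    (hx : ∀ s ∈ I, HasDerivAt x (x' s) s)
    (hy : ∀ s ∈ I, HasDerivAt y (y' s) s)
    (hx' : ∀ s ∈ I, HasDerivAt x' (x'' s) s)
    (hy' : ∀ s ∈ I, HasDerivAt y' (y'' s) s)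
    (hx0 : ∀ s ∈ I, x' s ≠ 0)
    (heq1 : ∀ s ∈ I, P (x s, y s) * x'' s =
      (fderiv ℝ P (x s, y s) (1, 0) * x' s
        + fderiv ℝ P (x s, y s) (0, 1) * y' s) * x' s)
    (heq2 : ∀ s ∈ I, Q (x s, y s) * y'' s =
      (fderiv ℝ Q (x s, y s) (1, 0) * x' s
        + fderiv ℝ Q (x s, y s) (0, 1) * y' s) * y' s)
    (g g' g'' : ℝ → ℝ)
    (hmem : ∀ s ∈ I, x s ∈ J)
    (hg : ∀ t ∈ J, HasDerivAt g (g' t) t)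
    (hg' : ∀ t ∈ J, HasDerivAt g' (g'' t) t)
    (hgy : ∀ s ∈ I, g (x s) = y s) :
    ∀ s ∈ I, g'' (x s) =
      fderiv ℝ K (x s, y s) (0, 1) * (g' (x s)) ^ 2
        + fderiv ℝ K (x s, y s) (1, 0) * g' (x s) :=
  stmt_2_general P Q hP hQ hPpos hQpos K hK I hI J x y x' y' x'' y'' hx hy hx' hy' hx0 heq1 heq2 g
    g' g'' hmem hg hg' hgy
end

section
/- Let K : ℝ² → ℝ be continuously differentiable and let x, y : I → ℝ be twice differentiable on an open interval I with x'(s) > 0 and y'(s) > 0 for all s ∈ I, satisfying the geodesic-type system x''(s) = −K_x(x(s),y(s))·(x'(s))² and y''(s) = K_y(x(s),y(s))·(y'(s))². Then the function s ↦ log(y'(s)) − log(x'(s)) − K(x(s),y(s)) is constant on I. In particular, if y'(s₀) = exp(K(x(s₀),y(s₀)))·x'(s₀) for some s₀ ∈ I, then y'(s) = exp(K(x(s),y(s)))·x'(s) for all s ∈ I. -/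
/-!
Along a solution, `(log y')' = y''/y' = K_y · y'` and `(log x')' = x''/x' = -K_x · x'`, while by the
chain rule `(K(x, y))' = K_x · x' + K_y · y'`. Hence `log y' - log x' - K(x, y)` has derivative
`0` on the interval and is constant there. The relation `y' = exp(K(x, y)) · x'` says exactly that
this constant is `0`.
-/

open Real

theorem IsPreconnected.eq_of_hasDerivAt_eq_zero {E : Type*} [NormedAddCommGroup E]
    [NormedSpace ℝ E] {f : ℝ → E} {s : Set ℝ} (hs : IsPreconnected s)
    (hf : ∀ t ∈ s, HasDerivAt f 0 t) {a b : ℝ} (ha : a ∈ s) (hb : b ∈ s) : f a = f b := by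
  have h := hs.convex.norm_image_sub_le_of_norm_hasDerivWithin_le
    (fun t ht => (hf t ht).hasDerivWithinAt) (fun _ _ => norm_zero.le) ha hb
  rw [zero_mul, norm_le_zero_iff, sub_eq_zero] at h
  exact h.symm

theorem ContinuousLinearMap.map_prod_eq_smul_add_smul {R M : Type*} [Semiring R]
    [TopologicalSpace R] [AddCommMonoid M] [TopologicalSpace M] [Module R M]
    (L : R × R →L[R] M) (a b : R) : L (a, b) = a • L (1, 0) + b • L (0, 1) := by
  have hab : ((a, b) : R × R) = a • ((1 : R), (0 : R)) + b • ((0 : R), (1 : R)) := by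
    simp
  rw [hab, map_add, map_smul, map_smul]

theorem HasFDerivAt.comp_hasDerivAt_prodMk {K : ℝ × ℝ → ℝ} {L : ℝ × ℝ →L[ℝ] ℝ}
    {x y : ℝ → ℝ} {x' y' s : ℝ} (hK : HasFDerivAt K L (x s, y s)) (hx : HasDerivAt x x' s)
    (hy : HasDerivAt y y' s) :
    HasDerivAt (fun t => K (x t, y t)) (x' * L (1, 0) + y' * L (0, 1)) s := by
  have h := hK.comp_hasDerivAt s (hx.prodMk hy)
  rwa [L.map_prod_eq_smul_add_smul] at h

theorem hasDerivAt_log_sub_log_sub_eq_zero {K : ℝ × ℝ → ℝ} {L : ℝ × ℝ →L[ℝ] ℝ}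
    {x y x' y' x'' y'' : ℝ → ℝ} {s : ℝ} (hK : HasFDerivAt K L (x s, y s))
    (hx : HasDerivAt x (x' s) s) (hy : HasDerivAt y (y' s) s)
    (hx' : HasDerivAt x' (x'' s) s) (hy' : HasDerivAt y' (y'' s) s)
    (hx'0 : x' s ≠ 0) (hy'0 : y' s ≠ 0)
    (heqx : x'' s = -L (1, 0) * x' s ^ 2) (heqy : y'' s = L (0, 1) * y' s ^ 2) :
    HasDerivAt (fun t => log (y' t) - log (x' t) - K (x t, y t)) 0 s := by
  have h := ((hy'.log hy'0).sub (hx'.log hx'0)).sub (hK.comp_hasDerivAt_prodMk hx hy)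
  have hzero : y'' s / y' s - x'' s / x' s - (x' s * L (1, 0) + y' s * L (0, 1)) = 0 := by
    rw [heqx, heqy]
    field_simp
    ring
  rw [hzero] at h
  exact h

theorem eq_exp_mul_iff_log_sub_log_sub_eq_zero {a b k : ℝ} (ha : 0 < a) (hb : 0 < b) :
    b = exp k * a ↔ log b - log a - k = 0 := by
  rw [← exp_log hb, ← exp_log ha, ← exp_add, exp_eq_exp, log_exp, log_exp]
  constructor <;> intro h <;> linarith

theorem stmt_3_general (K : ℝ × ℝ → ℝ) (hK : ContDiff ℝ 1 K)
    (I : Set ℝ) (hIconn : IsPreconnected I)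
    (x y x' y' x'' y'' : ℝ → ℝ)
    (hx : ∀ s ∈ I, HasDerivAt x (x' s) s)
    (hy : ∀ s ∈ I, HasDerivAt y (y' s) s)
    (hx' : ∀ s ∈ I, HasDerivAt x' (x'' s) s)
    (hy' : ∀ s ∈ I, HasDerivAt y' (y'' s) s)
    (hxpos : ∀ s ∈ I, 0 < x' s) (hypos : ∀ s ∈ I, 0 < y' s)
    (heq1 : ∀ s ∈ I, x'' s = -(fderiv ℝ K (x s, y s) (1, 0)) * (x' s) ^ 2)
    (heq2 : ∀ s ∈ I, y'' s = fderiv ℝ K (x s, y s) (0, 1) * (y' s) ^ 2) :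
    (∀ s ∈ I, ∀ t ∈ I,
      Real.log (y' s) - Real.log (x' s) - K (x s, y s)
        = Real.log (y' t) - Real.log (x' t) - K (x t, y t)) ∧
    (∀ s₀ ∈ I, y' s₀ = Real.exp (K (x s₀, y s₀)) * x' s₀ →
      ∀ s ∈ I, y' s = Real.exp (K (x s, y s)) * x' s) := by
  have hderiv : ∀ s ∈ I, HasDerivAt (fun t => log (y' t) - log (x' t) - K (x t, y t)) 0 s :=
    fun s hs => hasDerivAt_log_sub_log_sub_eq_zero
      ((hK.differentiable one_ne_zero _).hasFDerivAt) (hx s hs) (hy s hs) (hx' s hs) (hy' s hs)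
      (hxpos s hs).ne' (hypos s hs).ne' (heq1 s hs) (heq2 s hs)
  have hconst : ∀ s ∈ I, ∀ t ∈ I,
      log (y' s) - log (x' s) - K (x s, y s) = log (y' t) - log (x' t) - K (x t, y t) :=
    fun s hs t ht => hIconn.eq_of_hasDerivAt_eq_zero hderiv hs ht
  refine ⟨hconst, fun s₀ hs₀ h₀ s hs => ?_⟩
  rw [eq_exp_mul_iff_log_sub_log_sub_eq_zero (hxpos s₀ hs₀) (hypos s₀ hs₀)] at h₀
  rw [eq_exp_mul_iff_log_sub_log_sub_eq_zero (hxpos s hs) (hypos s hs)]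
  exact (hconst s hs s₀ hs₀).trans h₀

/-- For solutions of the geodesic-type system `x'' = −K_x·(x')²`,
`y'' = K_y·(y')²` with positive `x'`, `y'`, the quantity
`log(y') − log(x') − K(x,y)` is a first integral; in particular the relation
`y' = exp(K(x,y))·x'` propagates from one point to the whole interval. -/
theorem stmt_3 (K : ℝ × ℝ → ℝ) (hK : ContDiff ℝ 1 K)
    (I : Set ℝ) (hI : IsOpen I) (hIconn : IsPreconnected I)
    (x y x' y' x'' y'' : ℝ → ℝ)
    (hx : ∀ s ∈ I, HasDerivAt x (x' s) s)
    (hy : ∀ s ∈ I, HasDerivAt y (y' s) s)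
    (hx' : ∀ s ∈ I, HasDerivAt x' (x'' s) s)
    (hy' : ∀ s ∈ I, HasDerivAt y' (y'' s) s)
    (hxpos : ∀ s ∈ I, 0 < x' s) (hypos : ∀ s ∈ I, 0 < y' s)
    (heq1 : ∀ s ∈ I, x'' s = -(fderiv ℝ K (x s, y s) (1, 0)) * (x' s) ^ 2)
    (heq2 : ∀ s ∈ I, y'' s = fderiv ℝ K (x s, y s) (0, 1) * (y' s) ^ 2) :
    (∀ s ∈ I, ∀ t ∈ I,
      Real.log (y' s) - Real.log (x' s) - K (x s, y s)
        = Real.log (y' t) - Real.log (x' t) - K (x t, y t)) ∧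
    (∀ s₀ ∈ I, y' s₀ = Real.exp (K (x s₀, y s₀)) * x' s₀ →
      ∀ s ∈ I, y' s = Real.exp (K (x s, y s)) * x' s) :=
  stmt_3_general K hK I hIconn x y x' y' x'' y'' hx hy hx' hy' hxpos hypos heq1 heq2
end

section
/- Let Γ^k_{ij} : ℝⁿ → ℝ (1 ≤ i,j,k ≤ n) be smooth functions symmetric in the lower indices, and let a : ℝⁿ → ℝⁿ be continuously differentiable with components a_i. Suppose that for every open interval I and every twice differentiable solution x : I → ℝⁿ of the geodesic equations x''^k(s) + Γ^k_{ij}(x(s))·x'^i(s)·x'^j(s) = 0 the function s ↦ Σ_i a_i(x(s))·x'^i(s) is constant on I. Then a necessarily satisfies the Killing-type condition a_{i;j} + a_{j;i} = 0 at every point of ℝⁿ, where a_{i;j} = ∂a_i/∂x^j − a_k Γ^k_{ij}. -/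
open Set


/-- Conversely, if `Σ_i a_i(x(s))·x'^i(s)` is constant along every
geodesic of a smooth symmetric affine connection `Γ`, then the covector field `a`
satisfies the Killing-type condition `a_{i;j} + a_{j;i} = 0` everywhere. -/
theorem stmt_5 (n : ℕ) (hn : 0 < n)
    (Γ : Fin n → Fin n → Fin n → (Fin n → ℝ) → ℝ)
    (hΓsmooth : ∀ k i j, ContDiff ℝ (⊤ : ℕ∞) (Γ k i j))
    (hΓsym : ∀ k i j p, Γ k i j p = Γ k j i p)
    (a : (Fin n → ℝ) → (Fin n → ℝ)) (ha : ContDiff ℝ 1 a)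
    (hconst : ∀ (I : Set ℝ), IsOpen I → IsPreconnected I →
      ∀ (x x' x'' : ℝ → Fin n → ℝ),
        (∀ s ∈ I, HasDerivAt x (x' s) s) →
        (∀ s ∈ I, HasDerivAt x' (x'' s) s) →
        (∀ s ∈ I, ∀ k, x'' s k + ∑ i, ∑ j, Γ k i j (x s) * x' s i * x' s j = 0) →
        ∀ s ∈ I, ∀ t ∈ I, ∑ i, a (x s) i * x' s i = ∑ i, a (x t) i * x' t i) :
    ∀ (p : Fin n → ℝ) (i j : Fin n),
      (fderiv ℝ (fun q => a q i) p (Pi.single j 1) - ∑ k, a p k * Γ k i j p)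
        + (fderiv ℝ (fun q => a q j) p (Pi.single i 1) - ∑ k, a p k * Γ k j i p) = 0 := by
  have hdiff : ∀ i : Fin n, Differentiable ℝ (fun q => a q i) :=
    fun i => (contDiff_pi.1 ha i).differentiable one_ne_zero
  have key : ∀ (p v : Fin n → ℝ),
      ∑ i, fderiv ℝ (fun q => a q i) p v * v i
        = ∑ i', ∑ j', (∑ k, a p k * Γ k i' j' p) * v i' * v j' := by
    intro p v
    set F : (Fin n → ℝ) × (Fin n → ℝ) → (Fin n → ℝ) × (Fin n → ℝ) :=
      fun z => (z.2, fun k => -∑ i, ∑ j, Γ k i j z.1 * z.2 i * z.2 j) with hFdef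
    have hF : ContDiff ℝ 1 F := by
      apply ContDiff.prodMk contDiff_snd
      apply contDiff_pi.2
      intro k
      apply ContDiff.neg
      apply ContDiff.sum; intro i _
      apply ContDiff.sum; intro j _
      exact ((((hΓsmooth k i j).of_le (by simp)).comp contDiff_fst).mul
        (contDiff_pi.1 contDiff_snd i)).mul (contDiff_pi.1 contDiff_snd j)
    obtain ⟨f, hf0, ε, hε, hsol⟩ :=
      (hF.contDiffAt (x := (p, v))).exists_forall_mem_closedBall_exists_eq_forall_mem_Ioo_hasDerivAt₀ 0
    set I : Set ℝ := Ioo (0 - ε) (0 + ε) with hI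
    have h0 : (0:ℝ) ∈ I := by constructor <;> simp [hε]
    set x : ℝ → Fin n → ℝ := fun s => (f s).1 with hxdef
    set x' : ℝ → Fin n → ℝ := fun s => (f s).2 with hx'def
    set x'' : ℝ → Fin n → ℝ :=
      fun s k => -∑ i, ∑ j, Γ k i j (x s) * x' s i * x' s j with hx''def
    have hx : ∀ s ∈ I, HasDerivAt x (x' s) s := fun s hs =>
      (ContinuousLinearMap.fst ℝ (Fin n → ℝ) (Fin n → ℝ)).hasFDerivAt.comp_hasDerivAt s (hsol s hs)
    have hx' : ∀ s ∈ I, HasDerivAt x' (x'' s) s := fun s hs =>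
      (ContinuousLinearMap.snd ℝ (Fin n → ℝ) (Fin n → ℝ)).hasFDerivAt.comp_hasDerivAt s (hsol s hs)
    have hgeo : ∀ s ∈ I, ∀ k, x'' s k + ∑ i, ∑ j, Γ k i j (x s) * x' s i * x' s j = 0 := by
      intro s _ k
      simp [hx''def]
    have hc := hconst I isOpen_Ioo isPreconnected_Ioo x x' x'' hx hx' hgeo
    -- the conserved quantity is locally constant, so its derivative at 0 vanishes
    have hx0 : x 0 = p := by simp [hxdef, hf0]
    have hv0 : x' 0 = v := by simp [hx'def, hf0]
    have hD : HasDerivAt (fun s => ∑ i, a (x s) i * x' s i)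
        (∑ i, (fderiv ℝ (fun q => a q i) p v * v i + a p i * x'' 0 i)) 0 := by
      apply HasDerivAt.fun_sum
      intro i _
      have h1 : HasDerivAt (fun s => a (x s) i) (fderiv ℝ (fun q => a q i) p v) 0 := by
        have hfd : HasFDerivAt (fun q => a q i) (fderiv ℝ (fun q => a q i) p) (x 0) := by
          rw [hx0]; exact ((hdiff i) p).hasFDerivAt
        have := hfd.comp_hasDerivAt 0 (hx 0 h0)
        rwa [hv0] at this
      have h2 : HasDerivAt (fun s => x' s i) (x'' 0 i) 0 :=
        hasDerivAt_pi.1 (hx' 0 h0) i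
      have := h1.mul h2
      rw [hx0, hv0] at this
      exact this
    have hzero : HasDerivAt (fun s => ∑ i, a (x s) i * x' s i)
        0 0 := by
      have : (fun s => ∑ i, a (x s) i * x' s i) =ᶠ[nhds 0]
          (fun _ => ∑ i, a (x 0) i * x' 0 i) := by
        filter_upwards [Ioo_mem_nhds h0.1 h0.2] with t ht
        exact hc t ht 0 h0
      exact (hasDerivAt_const 0 _).congr_of_eventuallyEq this
    have hDeq := hD.unique hzero
    -- now rearrange
    have hx''0 : ∀ k, x'' 0 k = -∑ i', ∑ j', Γ k i' j' p * v i' * v j' := by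
      intro k; simp [hx''def, hx0, hv0]
    have h1 : ∑ i, fderiv ℝ (fun q => a q i) p v * v i
        = ∑ k, a p k * ∑ i', ∑ j', Γ k i' j' p * v i' * v j' := by
      have := hDeq
      simp only [hx''0] at this
      simp only [Finset.sum_add_distrib, mul_neg, Finset.sum_neg_distrib] at this
      linarith [this]
    rw [h1]
    simp_rw [Finset.mul_sum, Finset.sum_mul]
    rw [Finset.sum_comm]
    apply Finset.sum_congr rfl
    intro i' _
    rw [Finset.sum_comm]
    apply Finset.sum_congr rfl
    intro j' _
    apply Finset.sum_congr rfl
    intro k _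
    ring
  -- polarization
  intro p i j
  have esum : ∀ (g : Fin n → ℝ) (l : Fin n), ∑ i', g i' * (Pi.single l 1 : Fin n → ℝ) i' = g l := by
    intro g l
    simp [Pi.single_apply, mul_ite]
  have hki := key p (Pi.single i 1)
  have hkj := key p (Pi.single j 1)
  have hkij := key p (Pi.single i 1 + Pi.single j 1)
  set L : Fin n → (Fin n → ℝ) → ℝ := fun i' w => fderiv ℝ (fun q => a q i') p w with hL
  set c : Fin n → Fin n → ℝ := fun i' j' => ∑ k, a p k * Γ k i' j' p with hc
  have expand : ∀ u w : Fin n → ℝ,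
      ∑ i', fderiv ℝ (fun q => a q i') p (u + w) * (u + w) i'
        = (∑ i', L i' u * u i') + (∑ i', L i' u * w i')
          + (∑ i', L i' w * u i') + (∑ i', L i' w * w i') := by
    intro u w
    simp only [map_add, Pi.add_apply, hL]
    rw [← Finset.sum_add_distrib, ← Finset.sum_add_distrib, ← Finset.sum_add_distrib]
    apply Finset.sum_congr rfl
    intro i' _
    ring
  have expandc : ∀ u w : Fin n → ℝ,
      ∑ i', ∑ j', c i' j' * (u + w) i' * (u + w) j'
        = (∑ i', ∑ j', c i' j' * u i' * u j') + (∑ i', ∑ j', c i' j' * u i' * w j')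
          + (∑ i', ∑ j', c i' j' * w i' * u j') + (∑ i', ∑ j', c i' j' * w i' * w j') := by
    intro u w
    rw [← Finset.sum_add_distrib, ← Finset.sum_add_distrib, ← Finset.sum_add_distrib]
    apply Finset.sum_congr rfl
    intro i' _
    rw [← Finset.sum_add_distrib, ← Finset.sum_add_distrib, ← Finset.sum_add_distrib]
    apply Finset.sum_congr rfl
    intro j' _
    simp only [Pi.add_apply]
    ring
  have csum : ∀ l m : Fin n, ∑ i', ∑ j', c i' j' * (Pi.single l 1 : Fin n → ℝ) i' * (Pi.single m 1 : Fin n → ℝ) j' = c l m := by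
    intro l m
    have : ∀ i', ∑ j', c i' j' * (Pi.single l 1 : Fin n → ℝ) i' * (Pi.single m 1 : Fin n → ℝ) j'
        = (c i' m * (Pi.single l 1 : Fin n → ℝ) i') := by
      intro i'
      have := esum (fun j' => c i' j' * (Pi.single l 1 : Fin n → ℝ) i') m
      simpa [mul_right_comm] using this
    rw [Finset.sum_congr rfl fun i' _ => this i']
    exact esum (fun i' => c i' m) l
  have lsum : ∀ (w : Fin n → ℝ) (l : Fin n), ∑ i', L i' w * (Pi.single l 1 : Fin n → ℝ) i' = L l w :=
    fun w l => esum (fun i' => L i' w) l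
  rw [expand, expandc] at hkij
  rw [lsum, lsum, lsum, lsum, csum, csum, csum, csum] at hkij
  have hki' : L i (Pi.single i 1) = c i i := by
    have := hki
    rw [show (∑ i', fderiv ℝ (fun q => a q i') p (Pi.single i 1) * (Pi.single i 1 : Fin n → ℝ) i')
      = L i (Pi.single i 1) from lsum _ i, csum] at this
    exact this
  have hkj' : L j (Pi.single j 1) = c j j := by
    have := hkj
    rw [show (∑ i', fderiv ℝ (fun q => a q i') p (Pi.single j 1) * (Pi.single j 1 : Fin n → ℝ) i')
      = L j (Pi.single j 1) from lsum _ j, csum] at this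
    exact this
  have : L j (Pi.single i 1) + L i (Pi.single j 1) = c i j + c j i := by linarith
  show (L i (Pi.single j 1) - c i j) + (L j (Pi.single i 1) - c j i) = 0
  linarith
end

section
/- Let y : J → ℝ be a differentiable function on an open interval J satisfying y'(x) = Q(x,y(x))/P(x,y(x)) for all x ∈ J, and suppose P(x,y(x)) ≠ 0 and Δ(x,y(x)) ≠ 0 on J. Then y is twice differentiable and satisfies equation (24): y''(x) + [x(x−1)·P_y]/Δ·(y'(x))³ + [(P_x − Q_y)x² + (Q_y − P_x − 2P)x + P_y·y² − (2P + P_y)·y + 2P]/Δ·(y'(x))² + [−Q_x·x² + (Q_x + 2Q)x + (P_x − Q_y)y² + (2Q − P_x + Q_y)y − 2Q]/Δ·y'(x) + [y(1−y)·Q_x]/Δ = 0 for all x ∈ J, where all coefficient functions are evaluated at (x, y(x)). Thus dy/dx = Q/P is a particular integral of equation (24). -/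
/-
Along a solution `Q = y' P`, and differentiating this along the graph gives
`Q_x + y' Q_y = y'' P + y' (P_x + y' P_y)`, which determines `y''`. Modulo `Q = y' P` we have
`Δ = P (y² - y + y' (x² - x))`, and `Δ · (24)` is exactly `y² - y + y' (x² - x)` times the
differentiated relation.
-/

/-- Partial derivative with respect to the first argument. -/
noncomputable def pdx (F : ℝ × ℝ → ℝ) (p : ℝ × ℝ) : ℝ := fderiv ℝ F p (1, 0)

/-- Partial derivative with respect to the second argument. -/
noncomputable def pdy (F : ℝ × ℝ → ℝ) (p : ℝ × ℝ) : ℝ := fderiv ℝ F p (0, 1)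

/-- `Δ(x,y) = y²P − yP + x²Q − xQ`. -/
noncomputable def Delta (P Q : ℝ × ℝ → ℝ) (p : ℝ × ℝ) : ℝ :=
  p.2 ^ 2 * P p - p.2 * P p + p.1 ^ 2 * Q p - p.1 * Q p

/-- The left-hand side of equation (24), the second-order ODE cubic in the first
derivative associated with the planar system `dy/dx = Q/P`, evaluated with
`y = y(x)`, `y' = y'(x)`, `y'' = y''(x)`. -/
noncomputable def eq24LHS (P Q : ℝ × ℝ → ℝ) (x yx y1 y2 : ℝ) : ℝ :=
  y2
    + (x * (x - 1) * pdy P (x, yx)) / Delta P Q (x, yx) * y1 ^ 3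
    + ((pdx P (x, yx) - pdy Q (x, yx)) * x ^ 2
        + (pdy Q (x, yx) - pdx P (x, yx) - 2 * P (x, yx)) * x
        + pdy P (x, yx) * yx ^ 2
        - (2 * P (x, yx) + pdy P (x, yx)) * yx
        + 2 * P (x, yx)) / Delta P Q (x, yx) * y1 ^ 2
    + (-(pdx Q (x, yx)) * x ^ 2
        + (pdx Q (x, yx) + 2 * Q (x, yx)) * x
        + (pdx P (x, yx) - pdy Q (x, yx)) * yx ^ 2
        + (2 * Q (x, yx) - pdx P (x, yx) + pdy Q (x, yx)) * yx
        - 2 * Q (x, yx)) / Delta P Q (x, yx) * y1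
    + (yx * (1 - yx) * pdx Q (x, yx)) / Delta P Q (x, yx)

open Filter Topology

theorem hasDerivAt_comp_graph {F : ℝ × ℝ → ℝ} {y : ℝ → ℝ} {x y' : ℝ}
    (hF : DifferentiableAt ℝ F (x, y x)) (hy : HasDerivAt y y' x) :
    HasDerivAt (fun t => F (t, y t)) (pdx F (x, y x) + y' * pdy F (x, y x)) x := by
  have hcomp := hF.hasFDerivAt.comp_hasDerivAt x ((hasDerivAt_id x).prodMk hy)
  have hdir : ((1 : ℝ), y') = (1, 0) + y' • ((0 : ℝ), (1 : ℝ)) := by simp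
  rwa [hdir, map_add, map_smul] at hcomp

theorem hasDerivAt_deriv_of_eventually_hasDerivAt_div {f g y : ℝ → ℝ} {x f' g' : ℝ}
    (hf : HasDerivAt f f' x) (hg : HasDerivAt g g' x) (hg0 : g x ≠ 0)
    (hy : ∀ᶠ t in 𝓝 x, HasDerivAt y (f t / g t) t) :
    HasDerivAt (deriv y) ((f' - f x / g x * g') / g x) x :=
  ((hf.div hg hg0).congr_of_eventuallyEq (hy.mono fun _ ht => ht.deriv)).congr_deriv
    (by field_simp)

theorem eq24LHS_eq_zero {P Q : ℝ × ℝ → ℝ} {x yx y1 y2 : ℝ}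
    (hΔ : Delta P Q (x, yx) ≠ 0) (hQ : Q (x, yx) = y1 * P (x, yx))
    (hQ' : P (x, yx) * y2 = pdx Q (x, yx) + y1 * pdy Q (x, yx)
      - y1 * (pdx P (x, yx) + y1 * pdy P (x, yx))) :
    eq24LHS P Q x yx y1 y2 = 0 := by
  rw [eq24LHS]
  field_simp
  rw [Delta]
  linear_combination (yx ^ 2 - yx + y1 * (x ^ 2 - x)) * hQ'
    + ((x ^ 2 - x) * y2 + 2 * y1 * (x + yx - 1)) * hQ

theorem stmt_9_general (P Q : ℝ × ℝ → ℝ) (hP : ContDiff ℝ 1 P) (hQ : ContDiff ℝ 1 Q)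
    (J : Set ℝ) (hJ : IsOpen J)
    (y : ℝ → ℝ)
    (hy : ∀ x ∈ J, HasDerivAt y (Q (x, y x) / P (x, y x)) x)
    (hP0 : ∀ x ∈ J, P (x, y x) ≠ 0)
    (hΔ : ∀ x ∈ J, Delta P Q (x, y x) ≠ 0) :
    ∀ x ∈ J, ∃ y2 : ℝ,
      HasDerivAt (deriv y) y2 x ∧
      eq24LHS P Q x (y x) (deriv y x) y2 = 0 := by
  intro x hx
  have hPx := hasDerivAt_comp_graph (hP.differentiable one_ne_zero _) (hy x hx)
  have hQx := hasDerivAt_comp_graph (hQ.differentiable one_ne_zero _) (hy x hx)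
  have hy2 := hasDerivAt_deriv_of_eventually_hasDerivAt_div hQx hPx (hP0 x hx)
    (eventually_of_mem (hJ.mem_nhds hx) hy)
  refine ⟨_, hy2, ?_⟩
  rw [(hy x hx).deriv]
  refine eq24LHS_eq_zero (hΔ x hx) (div_mul_cancel₀ _ (hP0 x hx)).symm
    (mul_div_cancel₀ _ (hP0 x hx))

/-- Every solution of `dy/dx = Q(x,y)/P(x,y)` (with `P ≠ 0` and
`Δ ≠ 0` along it) is twice differentiable and satisfies equation (24); i.e.
`dy/dx = Q/P` is a particular integral of equation (24). -/
theorem stmt_9 (P Q : ℝ × ℝ → ℝ) (hP : ContDiff ℝ 1 P) (hQ : ContDiff ℝ 1 Q)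
    (J : Set ℝ) (hJ : IsOpen J) (hJconn : IsPreconnected J)
    (y : ℝ → ℝ)
    (hy : ∀ x ∈ J, HasDerivAt y (Q (x, y x) / P (x, y x)) x)
    (hP0 : ∀ x ∈ J, P (x, y x) ≠ 0)
    (hΔ : ∀ x ∈ J, Delta P Q (x, y x) ≠ 0) :
    ∀ x ∈ J, ∃ y2 : ℝ,
      HasDerivAt (deriv y) y2 x ∧
      eq24LHS P Q x (y x) (deriv y x) y2 = 0 :=
  stmt_9_general P Q hP hQ J hJ y hy hP0 hΔ
end

section
/- For every real constant C, the function y(x) = C(x−1)/(x−C) satisfies equation (24) at every point x with x ∉ {0, 1, C} and Δ(x,y(x)) ≠ 0: y''(x) + [x(x−1)·P_y]/Δ·(y'(x))³ + [(P_x − Q_y)x² + (Q_y − P_x − 2P)x + P_y·y² − (2P + P_y)·y + 2P]/Δ·(y'(x))² + [−Q_x·x² + (Q_x + 2Q)x + (P_x − Q_y)y² + (2Q − P_x + Q_y)y − 2Q]/Δ·y'(x) + [y(1−y)·Q_x]/Δ = 0, where all coefficient functions are evaluated at (x, y(x)). Thus equation (24) possesses the two-parameter family of solutions y = C(x−1)/(x−C)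 in addition to the integral curves of dy/dx = Q/P. -/
/-!
Clearing `Δ`, the left-hand side of (24) splits into the coefficients of `P_y`, `P_x - Q_y`,
`Q_x`, `P` and `Q`, and each of them vanishes on the 2-jet of any solution of the separable
equation `x(x-1) y' = y(1-y)`: the first three are multiples of `x(x-1) y' - y(1-y)`, the last
two follow from its derivative `x(x-1) y'' = -2(x+y-1) y'`. The curves `y = C(x-1)/(x-C)` solve
that equation.
-/

theorem eq24LHS_eq_zero_of_separable (P Q : ℝ × ℝ → ℝ) {x y y1 y2 : ℝ}
    (hΔ : Delta P Q (x, y) ≠ 0) (h1 : x * (x - 1) * y1 = y * (1 - y))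
    (h2 : x * (x - 1) * y2 = -2 * (x + y - 1) * y1) :
    eq24LHS P Q x y y1 y2 = 0 := by
  unfold eq24LHS
  field_simp
  unfold Delta
  linear_combination
    (pdy P (x, y) * y1 ^ 2 + (pdx P (x, y) - pdy Q (x, y)) * y1 - pdx Q (x, y)
      + P (x, y) * y2) * h1 + (Q (x, y) - P (x, y) * y1) * h2

theorem hasDerivAt_div_sub (C x : ℝ) (hxC : x ≠ C) :
    HasDerivAt (fun t : ℝ => C * (t - 1) / (t - C)) (C * (1 - C) / (x - C) ^ 2) x := by
  have hne : x - C ≠ 0 := sub_ne_zero.mpr hxC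
  have := ((((hasDerivAt_id' x).sub_const 1).const_mul C).fun_div
    ((hasDerivAt_id' x).sub_const C) hne)
  refine this.congr_deriv ?_
  field_simp
  ring

theorem hasDerivAt_deriv_div_sub (C x : ℝ) (hxC : x ≠ C) :
    HasDerivAt (deriv fun t : ℝ => C * (t - 1) / (t - C))
      (-2 * (C * (1 - C)) / (x - C) ^ 3) x := by
  have hne : x - C ≠ 0 := sub_ne_zero.mpr hxC
  have hderiv : deriv (fun t : ℝ => C * (t - 1) / (t - C))
      =ᶠ[nhds x] fun t => C * (1 - C) / (t - C) ^ 2 :=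
    Filter.eventuallyEq_of_mem (isOpen_ne.mem_nhds hxC)
      fun t ht => (hasDerivAt_div_sub C t ht).deriv
  have := (hasDerivAt_const x (C * (1 - C))).fun_div
    (((hasDerivAt_id' x).sub_const C).fun_pow 2) (pow_ne_zero 2 hne)
  refine (this.congr_deriv ?_).congr_of_eventuallyEq hderiv
  field_simp
  ring

theorem stmt_11_general (P Q : ℝ × ℝ → ℝ)
    (C : ℝ) (x : ℝ) (hxC : x ≠ C)
    (hΔ : Delta P Q (x, C * (x - 1) / (x - C)) ≠ 0) :
    ∃ y2 : ℝ,
      HasDerivAt (deriv fun t : ℝ => C * (t - 1) / (t - C)) y2 x ∧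
      eq24LHS P Q x (C * (x - 1) / (x - C))
        (deriv (fun t : ℝ => C * (t - 1) / (t - C)) x) y2 = 0 := by
  have hne : x - C ≠ 0 := sub_ne_zero.mpr hxC
  refine ⟨_, hasDerivAt_deriv_div_sub C x hxC, ?_⟩
  rw [(hasDerivAt_div_sub C x hxC).deriv]
  apply eq24LHS_eq_zero_of_separable P Q hΔ
  · field_simp
    ring
  · field_simp
    ring

/-- For every constant `C`, the function `y(x) = C(x−1)/(x−C)`
satisfies equation (24) at every `x ∉ {0, 1, C}` with `Δ(x, y(x)) ≠ 0`; thus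
equation (24) possesses the two-parameter family of solutions `y = C(x−1)/(x−C)`
in addition to the integral curves of `dy/dx = Q/P`. -/
theorem stmt_11 (P Q : ℝ × ℝ → ℝ) (hP : ContDiff ℝ 1 P) (hQ : ContDiff ℝ 1 Q)
    (C : ℝ) (x : ℝ) (hx0 : x ≠ 0) (hx1 : x ≠ 1) (hxC : x ≠ C)
    (hΔ : Delta P Q (x, C * (x - 1) / (x - C)) ≠ 0) :
    ∃ y2 : ℝ,
      HasDerivAt (deriv fun t : ℝ => C * (t - 1) / (t - C)) y2 x ∧
      eq24LHS P Q x (C * (x - 1) / (x - C))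
        (deriv (fun t : ℝ => C * (t - 1) / (t - C)) x) y2 = 0 :=
  stmt_11_general P Q C x hxC hΔ
end

section
/- Let a ∈ ℝ and define P(x,y) = 2 + 4x − 4ax² + 12xy, Q(x,y) = 8 − 3a − 14ax − 2axy − 8y², and φ(x,y) = 1/4 + x − x² + ax³ + xy + x²y². Then the polynomial identity P(x,y)·φ_x(x,y) + Q(x,y)·φ_y(x,y) = (8 − 12ax + 8y)·φ(x,y) holds for all (x,y) ∈ ℝ², where φ_x = 1 − 2x + 3ax² + y + 2xy² and φ_y = x + 2x²y. In particular, the algebraic curve φ(x,y) = 0 is an invariant curve of the quadratic system dx/ds = P(x,y), dy/ds = Q(x,y). -/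
/-- The polynomial identity
`P·φ_x + Q·φ_y = (8 − 12ax + 8y)·φ` for system (34), where
`P = 2 + 4x − 4ax² + 12xy`, `Q = 8 − 3a − 14ax − 2axy − 8y²` and
`φ = 1/4 + x − x² + ax³ + xy + x²y²`; hence `φ = 0` is an invariant algebraic curve
of the system. -/
theorem stmt_12 (a : ℝ)
    (P Q φ φx φy : ℝ → ℝ → ℝ)
    (hP : ∀ x y, P x y = 2 + 4 * x - 4 * a * x ^ 2 + 12 * x * y)
    (hQ : ∀ x y, Q x y = 8 - 3 * a - 14 * a * x - 2 * a * x * y - 8 * y ^ 2)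
    (hφ : ∀ x y, φ x y = 1 / 4 + x - x ^ 2 + a * x ^ 3 + x * y + x ^ 2 * y ^ 2)
    (hφx : ∀ x y, φx x y = 1 - 2 * x + 3 * a * x ^ 2 + y + 2 * x * y ^ 2)
    (hφy : ∀ x y, φy x y = x + 2 * x ^ 2 * y) :
    ∀ x y : ℝ,
      P x y * φx x y + Q x y * φy x y = (8 - 12 * a * x + 8 * y) * φ x y := by
  intro x y; simp only [hP, hQ, hφ, hφx, hφy]; ring
end

section
/- Let a ∈ ℝ and let (x,y) : I → ℝ² be a differentiable solution on an open interval I containing 0 of the system x'(s) = 2 + 4x − 4ax² + 12xy, y'(s) = 8 − 3a − 14ax − 2axy − 8y². If φ(x(0),y(0)) = 0, where φ(x,y) = 1/4 + x − x² + ax³ + xy + x²y², then φ(x(s),y(s)) = 0 for all s ∈ I; i.e., the curve 1/4 + x − x² + ax³ + xy + x²y² = 0 consists of trajectories of the system and at suitable values of a presents a limit cycle. -/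
/-!
`φ` is a Darboux polynomial of the system, with cofactor `K = 8 + 8y − 12ax`: along any
solution, `(φ ∘ γ)' = (K ∘ γ) · (φ ∘ γ)`. So `φ ∘ γ` solves a scalar linear ODE with continuous
coefficient, and by uniqueness of solutions (Grönwall) it vanishes wherever it vanishes at `0`.
-/

open Set

theorem IsPreconnected.eq_zero_of_hasDerivAt_smul_self {E : Type*} [NormedAddCommGroup E]
    [NormedSpace ℝ E] {I : Set ℝ} (hI : IsPreconnected I) {k : ℝ → ℝ} (hk : ContinuousOn k I)
    {F : ℝ → E} (hF : ∀ t ∈ I, HasDerivAt F (k t • F t) t) {t₀ : ℝ} (ht₀ : t₀ ∈ I)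
    (hF₀ : F t₀ = 0) : ∀ t ∈ I, F t = 0 := by
  intro t ht
  have hsub : uIcc t₀ t ⊆ I := hI.ordConnected.uIcc_subset ht₀ ht
  obtain ⟨C, hC⟩ := isCompact_uIcc.exists_bound_of_continuousOn (hk.mono hsub)
  have hlip : ∀ τ ∈ uIcc t₀ t, LipschitzOnWith ‖C‖₊ (k τ • · : E → E) univ := fun τ hτ =>
    ((lipschitzWith_smul (k τ)).weaken <| by
      rw [← NNReal.coe_le_coe, coe_nnnorm, coe_nnnorm]
      exact (hC τ hτ).trans (le_abs_self C)).lipschitzOnWith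
  have hF' : ∀ τ ∈ uIcc t₀ t, HasDerivAt F (k τ • F τ) τ := fun τ hτ => hF τ (hsub hτ)
  have hFc : ContinuousOn F (uIcc t₀ t) := HasDerivAt.continuousOn hF'
  have hzero : ∀ τ, HasDerivAt (0 : ℝ → E) (k τ • (0 : ℝ → E) τ) τ := fun τ => by simp
  rcases le_total t₀ t with h | h
  · rw [uIcc_of_le h] at hlip hFc hF'
    exact ODE_solution_unique_of_mem_Icc_right (s := fun _ => univ)
      (fun τ hτ => hlip τ (Ico_subset_Icc_self hτ)) hFc
      (fun τ hτ => (hF' τ (Ico_subset_Icc_self hτ)).hasDerivWithinAt) (fun _ _ => trivial)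
      continuousOn_const (fun τ _ => (hzero τ).hasDerivWithinAt) (fun _ _ => trivial) hF₀
      (right_mem_Icc.2 h)
  · rw [uIcc_of_ge h] at hlip hFc hF'
    exact ODE_solution_unique_of_mem_Icc_left (s := fun _ => univ)
      (fun τ hτ => hlip τ (Ioc_subset_Icc_self hτ)) hFc
      (fun τ hτ => (hF' τ (Ioc_subset_Icc_self hτ)).hasDerivWithinAt) (fun _ _ => trivial)
      continuousOn_const (fun τ _ => (hzero τ).hasDerivWithinAt) (fun _ _ => trivial) hF₀
      (left_mem_Icc.2 h)

namespace System34

variable (a : ℝ)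

noncomputable def phi (x y : ℝ) : ℝ := 1 / 4 + x - x ^ 2 + a * x ^ 3 + x * y + x ^ 2 * y ^ 2

def cofactor (x y : ℝ) : ℝ := 8 + 8 * y - 12 * a * x

theorem phi_darboux (x y : ℝ) :
    (1 - 2 * x + 3 * a * x ^ 2 + y + 2 * x * y ^ 2) * (2 + 4 * x - 4 * a * x ^ 2 + 12 * x * y)
      + (x + 2 * x ^ 2 * y) * (8 - 3 * a - 14 * a * x - 2 * a * x * y - 8 * y ^ 2)
      = cofactor a x y * phi a x y := by
  unfold cofactor phi
  ring

variable {a}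

theorem hasDerivAt_phi_comp {x y : ℝ → ℝ} {s : ℝ}
    (hx : HasDerivAt x (2 + 4 * x s - 4 * a * (x s) ^ 2 + 12 * x s * y s) s)
    (hy : HasDerivAt y (8 - 3 * a - 14 * a * x s - 2 * a * x s * y s - 8 * (y s) ^ 2) s) :
    HasDerivAt (fun t => phi a (x t) (y t)) (cofactor a (x s) (y s) * phi a (x s) (y s)) s := by
  rw [← phi_darboux]
  refine (((((hx.const_add (1 / 4)).fun_sub (hx.fun_pow 2)).fun_add
    ((hx.fun_pow 3).const_mul a)).fun_add (hx.fun_mul hy)).fun_add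
    ((hx.fun_pow 2).fun_mul (hy.fun_pow 2))).congr_deriv ?_
  norm_num
  ring

end System34

theorem stmt_13_general (a : ℝ)
    (I : Set ℝ) (hIconn : IsPreconnected I) (h0 : (0 : ℝ) ∈ I)
    (x y : ℝ → ℝ)
    (hx : ∀ s ∈ I, HasDerivAt x
      (2 + 4 * x s - 4 * a * (x s) ^ 2 + 12 * x s * y s) s)
    (hy : ∀ s ∈ I, HasDerivAt y
      (8 - 3 * a - 14 * a * x s - 2 * a * x s * y s - 8 * (y s) ^ 2) s)
    (hinit : 1 / 4 + x 0 - (x 0) ^ 2 + a * (x 0) ^ 3 + x 0 * y 0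
      + (x 0) ^ 2 * (y 0) ^ 2 = 0) :
    ∀ s ∈ I, 1 / 4 + x s - (x s) ^ 2 + a * (x s) ^ 3 + x s * y s
      + (x s) ^ 2 * (y s) ^ 2 = 0 := by
  have hcofactor : ContinuousOn (fun s => System34.cofactor a (x s) (y s)) I := by
    have hxc : ContinuousOn x I := HasDerivAt.continuousOn hx
    have hyc : ContinuousOn y I := HasDerivAt.continuousOn hy
    unfold System34.cofactor
    fun_prop
  exact hIconn.eq_zero_of_hasDerivAt_smul_self (F := fun s => System34.phi a (x s) (y s)) hcofactor
    (fun s hs => System34.hasDerivAt_phi_comp (hx s hs) (hy s hs)) h0 hinit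

/-- If a solution of system (34) starts on the algebraic curve
`φ(x,y) = 1/4 + x − x² + ax³ + xy + x²y² = 0`, it remains on it: the curve consists
of trajectories of the system (and at suitable values of `a` it is a limit cycle). -/
theorem stmt_13 (a : ℝ)
    (I : Set ℝ) (hI : IsOpen I) (hIconn : IsPreconnected I) (h0 : (0 : ℝ) ∈ I)
    (x y : ℝ → ℝ)
    (hx : ∀ s ∈ I, HasDerivAt x
      (2 + 4 * x s - 4 * a * (x s) ^ 2 + 12 * x s * y s) s)
    (hy : ∀ s ∈ I, HasDerivAt y
      (8 - 3 * a - 14 * a * x s - 2 * a * x s * y s - 8 * (y s) ^ 2) s)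
    (hinit : 1 / 4 + x 0 - (x 0) ^ 2 + a * (x 0) ^ 3 + x 0 * y 0
      + (x 0) ^ 2 * (y 0) ^ 2 = 0) :
    ∀ s ∈ I, 1 / 4 + x s - (x s) ^ 2 + a * (x s) ^ 3 + x s * y s
      + (x s) ^ 2 * (y s) ^ 2 = 0 :=
  stmt_13_general a I hIconn h0 x y hx hy hinit
end

section
/- Let a ∈ ℝ and define P(x,y) = 5x + 6x² + 4(1+a)xy + ay², Q(x,y) = x + 2y + 4xy + (2+3a)y², and f(x,y) = x² + x³ + x²y + 2axy² + 2axy³ + a²y⁴. Then the polynomial identity P(x,y)·f_x(x,y) + Q(x,y)·f_y(x,y) = (10 + 18x + (10 + 12a)y)·f(x,y) holds for all (x,y) ∈ ℝ², where f_x = 2x + 3x² + 2xy + 2ay² + 2ay³ and f_y = x² + 4axy + 6axy² + 4a²y³. In particular, the quartic algebraic curve f(x,y) = 0 is an invariant curve of the quadratic system dx/ds = P(x,y), dy/ds = Q(x,y). -/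
/-- The polynomial identity
`P·f_x + Q·f_y = (10 + 18x + (10 + 12a)y)·f` for system (37), where
`P = 5x + 6x² + 4(1+a)xy + ay²`, `Q = x + 2y + 4xy + (2+3a)y²` and
`f = x² + x³ + x²y + 2axy² + 2axy³ + a²y⁴`; hence the quartic curve `f = 0` is an
invariant algebraic curve of the system. -/
theorem stmt_15 (a : ℝ)
    (P Q f fx fy : ℝ → ℝ → ℝ)
    (hP : ∀ x y, P x y = 5 * x + 6 * x ^ 2 + 4 * (1 + a) * x * y + a * y ^ 2)
    (hQ : ∀ x y, Q x y = x + 2 * y + 4 * x * y + (2 + 3 * a) * y ^ 2)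
    (hf : ∀ x y, f x y = x ^ 2 + x ^ 3 + x ^ 2 * y + 2 * a * x * y ^ 2
      + 2 * a * x * y ^ 3 + a ^ 2 * y ^ 4)
    (hfx : ∀ x y, fx x y = 2 * x + 3 * x ^ 2 + 2 * x * y + 2 * a * y ^ 2
      + 2 * a * y ^ 3)
    (hfy : ∀ x y, fy x y = x ^ 2 + 4 * a * x * y + 6 * a * x * y ^ 2
      + 4 * a ^ 2 * y ^ 3) :
    ∀ x y : ℝ,
      P x y * fx x y + Q x y * fy x y
        = (10 + 18 * x + (10 + 12 * a) * y) * f x y := by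
  intro x y; rw [hP, hQ, hf, hfx, hfy]; ring
end

section
/- Let a ∈ ℝ and let (x,y) : I → ℝ² be a differentiable solution on an open interval I containing 0 of the system x'(s) = 5x + 6x² + 4(1+a)xy + ay², y'(s) = x + 2y + 4xy + (2+3a)y². If f(x(0),y(0)) = 0, where f(x,y) = x² + x³ + x²y + 2axy² + 2axy³ + a²y⁴, then f(x(s),y(s)) = 0 for all s ∈ I; i.e., the quartic curve x² + x³ + x²y + 2axy² + 2axy³ + a²y⁴ = 0 consists of trajectories of the system. -/
/-!
The quartic `f` is a Darboux polynomial of the vector field: along any solution,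
`d/ds f(x, y) = K(x, y) · f(x, y)` with cofactor `K = 10 + 18x + (10 + 12a)y`.
Hence `f(x(s), y(s)) · exp (-∫₀ˢ K)` has zero derivative on the interval, so it is constant,
and a solution that starts on `f = 0` stays there.
-/

open Set intervalIntegral

section LinearODE

variable {I : Set ℝ} {K F : ℝ → ℝ} {t₀ : ℝ}

theorem hasDerivAt_integral_of_continuousOn (hI : IsOpen I) (hIc : IsPreconnected I)
    (hK : ContinuousOn K I) (ht₀ : t₀ ∈ I) {s : ℝ} (hs : s ∈ I) :
    HasDerivAt (fun t => ∫ u in t₀..t, K u) (K s) s := by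
  have hsub : uIcc t₀ s ⊆ I := hIc.convex.ordConnected.uIcc_subset ht₀ hs
  exact integral_hasDerivAt_right (hK.mono hsub).intervalIntegrable
    (hK.stronglyMeasurableAtFilter hI s hs) (hK.continuousAt (hI.mem_nhds hs))

theorem eq_zero_of_hasDerivAt_mul_self (hI : IsOpen I) (hIc : IsPreconnected I)
    (hK : ContinuousOn K I) (hF : ∀ s ∈ I, HasDerivAt F (K s * F s) s)
    (ht₀ : t₀ ∈ I) (hF₀ : F t₀ = 0) : ∀ s ∈ I, F s = 0 := by
  set G : ℝ → ℝ := fun t => F t * Real.exp (-∫ u in t₀..t, K u)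
  have hG : ∀ s ∈ I, HasDerivAt G 0 s := fun s hs => by
    refine HasDerivAt.congr_deriv (f := G) ((hF s hs).mul
      (hasDerivAt_integral_of_continuousOn hI hIc hK ht₀ hs).neg.exp) ?_
    simp only [Pi.neg_apply]
    ring
  have hG_const : ∀ s ∈ I, G s = G t₀ := fun s hs =>
    hI.is_const_of_deriv_eq_zero hIc
      (fun t ht => (hG t ht).differentiableAt.differentiableWithinAt)
      (fun t ht => (hG t ht).deriv) hs ht₀
  intro s hs
  have hGs : G s = 0 := by simp [hG_const s hs, G, hF₀]
  simpa [G, Real.exp_ne_zero] using hGs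

end LinearODE

section Quartic

def quartic (a x y : ℝ) : ℝ :=
  x ^ 2 + x ^ 3 + x ^ 2 * y + 2 * a * x * y ^ 2 + 2 * a * x * y ^ 3 + a ^ 2 * y ^ 4

def quarticCofactor (a x y : ℝ) : ℝ := 10 + 18 * x + (10 + 12 * a) * y

variable {a s : ℝ} {x y : ℝ → ℝ}

theorem hasDerivAt_quartic
    (hx : HasDerivAt x (5 * x s + 6 * x s ^ 2 + 4 * (1 + a) * x s * y s + a * y s ^ 2) s)
    (hy : HasDerivAt y (x s + 2 * y s + 4 * x s * y s + (2 + 3 * a) * y s ^ 2) s) :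
    HasDerivAt (fun t => quartic a (x t) (y t))
      (quarticCofactor a (x s) (y s) * quartic a (x s) (y s)) s := by
  have H := (hx.pow 2).add (hx.pow 3) |>.add ((hx.pow 2).mul hy)
    |>.add ((hx.const_mul (2 * a)).mul (hy.pow 2))
    |>.add ((hx.const_mul (2 * a)).mul (hy.pow 3)) |>.add ((hy.pow 4).const_mul (a ^ 2))
  refine HasDerivAt.congr_deriv (f := fun t => quartic a (x t) (y t)) H ?_
  simp only [quarticCofactor, quartic, Pi.pow_apply]
  push_cast
  ring

end Quartic

/-- If a solution of system (37) starts on the quartic curve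
`f(x,y) = x² + x³ + x²y + 2axy² + 2axy³ + a²y⁴ = 0`, it remains on it: the quartic
curve consists of trajectories of the system. -/
theorem stmt_16 (a : ℝ)
    (I : Set ℝ) (hI : IsOpen I) (hIconn : IsPreconnected I) (h0 : (0 : ℝ) ∈ I)
    (x y : ℝ → ℝ)
    (hx : ∀ s ∈ I, HasDerivAt x
      (5 * x s + 6 * (x s) ^ 2 + 4 * (1 + a) * x s * y s + a * (y s) ^ 2) s)
    (hy : ∀ s ∈ I, HasDerivAt y
      (x s + 2 * y s + 4 * x s * y s + (2 + 3 * a) * (y s) ^ 2) s)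
    (hinit : (x 0) ^ 2 + (x 0) ^ 3 + (x 0) ^ 2 * y 0 + 2 * a * x 0 * (y 0) ^ 2
      + 2 * a * x 0 * (y 0) ^ 3 + a ^ 2 * (y 0) ^ 4 = 0) :
    ∀ s ∈ I, (x s) ^ 2 + (x s) ^ 3 + (x s) ^ 2 * y s + 2 * a * x s * (y s) ^ 2
      + 2 * a * x s * (y s) ^ 3 + a ^ 2 * (y s) ^ 4 = 0 := by
  have hK : ContinuousOn (fun t => quarticCofactor a (x t) (y t)) I := fun t ht =>
    ((continuousAt_const.add (continuousAt_const.mul (hx t ht).continuousAt)).add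
      (continuousAt_const.mul (hy t ht).continuousAt)).continuousWithinAt
  exact eq_zero_of_hasDerivAt_mul_self hI hIconn hK
    (fun t ht => hasDerivAt_quartic (hx t ht) (hy t ht)) h0 hinit
end

section
/- Let a ∈ ℝ and let y : J → ℝ be a differentiable function on an open interval J such that x² + x³ + x²·y(x) + 2ax·y(x)² + 2ax·y(x)³ + a²·y(x)⁴ = 0 for all x ∈ J, with x² + 4ax·y(x) + 6ax·y(x)² + 4a²·y(x)³ ≠ 0 on J. Then y'(x) = −(2x + 3x² + 2x·y(x) + 2a·y(x)² + 2a·y(x)³)/(x² + 4ax·y(x) + 6ax·y(x)² + 4a²·y(x)³) for all x ∈ J; moreover, at every point of J where 5x + 6x² + 4(1+a)x·y(x) + a·y(x)² ≠ 0, this equals (x + 2y(x) + 4x·y(x) + (2+3a)·y(x)²)/(5x + 6x² + 4(1+a)x·y(x) + a·y(x)²), i.e., the function y defined implicitly by the quartic relation satisfies the first-order equation dy/dx = Q/P of system (37). -/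
/-!
Differentiating `f(t, y t) = 0` gives `f_x + f_y y' = 0`, hence `y' = -f_x / f_y`. The curve
`f = 0` is invariant for system (37) with cofactor `K = 10 + 18x + 10y + 12ay`, i.e.
`P f_x + Q f_y = K f`, so on the curve `-f_x P = f_y Q`, which is `-f_x / f_y = Q / P`.
-/

open Filter Topology

theorem eq_neg_div_of_hasDerivAt_add_mul {g : ℝ → ℝ} {x c A B y' : ℝ}
    (hg : HasDerivAt g (A + B * y') x) (hconst : ∀ᶠ t in 𝓝 x, g t = c) (hB : B ≠ 0) :
    y' = -A / B := by
  have hzero : A + B * y' = 0 := hg.unique ((hasDerivAt_const x c).congr_of_eventuallyEq hconst)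
  rw [eq_div_iff hB]
  linear_combination hzero

namespace System37

variable (a : ℝ)

def P (x y : ℝ) : ℝ := 5 * x + 6 * x ^ 2 + 4 * (1 + a) * x * y + a * y ^ 2

def Q (x y : ℝ) : ℝ := x + 2 * y + 4 * x * y + (2 + 3 * a) * y ^ 2

def f (x y : ℝ) : ℝ :=
  x ^ 2 + x ^ 3 + x ^ 2 * y + 2 * a * x * y ^ 2 + 2 * a * x * y ^ 3 + a ^ 2 * y ^ 4

def fx (x y : ℝ) : ℝ := 2 * x + 3 * x ^ 2 + 2 * x * y + 2 * a * y ^ 2 + 2 * a * y ^ 3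

def fy (x y : ℝ) : ℝ := x ^ 2 + 4 * a * x * y + 6 * a * x * y ^ 2 + 4 * a ^ 2 * y ^ 3

def cofactor (x y : ℝ) : ℝ := 10 + 18 * x + 10 * y + 12 * a * y

theorem P_mul_fx_add_Q_mul_fy (x y : ℝ) :
    P a x y * fx a x y + Q a x y * fy a x y = cofactor a x y * f a x y := by
  unfold P Q fx fy cofactor f
  ring

theorem neg_fx_div_fy_eq_Q_div_P {x y : ℝ} (hf : f a x y = 0) (hfy : fy a x y ≠ 0)
    (hP : P a x y ≠ 0) : -fx a x y / fy a x y = Q a x y / P a x y := by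
  rw [div_eq_div_iff hfy hP]
  linear_combination -P_mul_fx_add_Q_mul_fy a x y - cofactor a x y * hf

theorem hasDerivAt_f_comp {y : ℝ → ℝ} {x y' : ℝ} (hy : HasDerivAt y y' x) :
    HasDerivAt (fun t => f a t (y t)) (fx a x (y x) + fy a x (y x) * y') x := by
  have ht := hasDerivAt_id' x
  have hc := fun c : ℝ => hasDerivAt_const x c
  refine ((((((ht.pow 2).add (ht.pow 3)).add ((ht.pow 2).mul hy)).add
    (((hc (2 * a)).mul ht).mul (hy.pow 2))).add (((hc (2 * a)).mul ht).mul (hy.pow 3))).add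
    ((hc (a ^ 2)).mul (hy.pow 4))).congr_deriv ?_
  simp only [fx, fy, Pi.pow_apply, Pi.mul_apply]
  ring

end System37

open System37 in
theorem stmt_17_general (a : ℝ)
    (J : Set ℝ) (hJ : IsOpen J)
    (y : ℝ → ℝ)
    (hdiff : ∀ x ∈ J, DifferentiableAt ℝ y x)
    (hcurve : ∀ x ∈ J, x ^ 2 + x ^ 3 + x ^ 2 * y x + 2 * a * x * (y x) ^ 2
      + 2 * a * x * (y x) ^ 3 + a ^ 2 * (y x) ^ 4 = 0)
    (hden : ∀ x ∈ J, x ^ 2 + 4 * a * x * y x + 6 * a * x * (y x) ^ 2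
      + 4 * a ^ 2 * (y x) ^ 3 ≠ 0) :
    ∀ x ∈ J,
      HasDerivAt y
        (-(2 * x + 3 * x ^ 2 + 2 * x * y x + 2 * a * (y x) ^ 2 + 2 * a * (y x) ^ 3)
          / (x ^ 2 + 4 * a * x * y x + 6 * a * x * (y x) ^ 2
              + 4 * a ^ 2 * (y x) ^ 3)) x ∧
      (5 * x + 6 * x ^ 2 + 4 * (1 + a) * x * y x + a * (y x) ^ 2 ≠ 0 →
        -(2 * x + 3 * x ^ 2 + 2 * x * y x + 2 * a * (y x) ^ 2 + 2 * a * (y x) ^ 3)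
            / (x ^ 2 + 4 * a * x * y x + 6 * a * x * (y x) ^ 2
                + 4 * a ^ 2 * (y x) ^ 3)
          = (x + 2 * y x + 4 * x * y x + (2 + 3 * a) * (y x) ^ 2)
            / (5 * x + 6 * x ^ 2 + 4 * (1 + a) * x * y x + a * (y x) ^ 2)) := by
  intro x hx
  have hy := (hdiff x hx).hasDerivAt
  have hf_zero : ∀ᶠ t in 𝓝 x, f a t (y t) = 0 :=
    eventually_of_mem (hJ.mem_nhds hx) hcurve
  have hderiv : deriv y x = -fx a x (y x) / fy a x (y x) :=
    eq_neg_div_of_hasDerivAt_add_mul (hasDerivAt_f_comp a hy) hf_zero (hden x hx)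
  exact ⟨hderiv ▸ hy, neg_fx_div_fy_eq_Q_div_P a (hcurve x hx) (hden x hx)⟩

/-- A differentiable function `y` lying on the invariant quartic
curve `x² + x³ + x²y + 2axy² + 2axy³ + a²y⁴ = 0` of system (37), with
`x² + 4axy + 6axy² + 4a²y³ ≠ 0`, satisfies
`y' = −(2x + 3x² + 2xy + 2ay² + 2ay³)/(x² + 4axy + 6axy² + 4a²y³)`; moreover,
wherever `5x + 6x² + 4(1+a)xy + ay² ≠ 0` this value coincides with
`(x + 2y + 4xy + (2+3a)y²)/(5x + 6x² + 4(1+a)xy + ay²)`, i.e. the implicitly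
defined function satisfies `dy/dx = Q/P` for system (37). -/
theorem stmt_17 (a : ℝ)
    (J : Set ℝ) (hJ : IsOpen J) (hJconn : IsPreconnected J)
    (y : ℝ → ℝ)
    (hdiff : ∀ x ∈ J, DifferentiableAt ℝ y x)
    (hcurve : ∀ x ∈ J, x ^ 2 + x ^ 3 + x ^ 2 * y x + 2 * a * x * (y x) ^ 2
      + 2 * a * x * (y x) ^ 3 + a ^ 2 * (y x) ^ 4 = 0)
    (hden : ∀ x ∈ J, x ^ 2 + 4 * a * x * y x + 6 * a * x * (y x) ^ 2
      + 4 * a ^ 2 * (y x) ^ 3 ≠ 0) :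
    ∀ x ∈ J,
      HasDerivAt y
        (-(2 * x + 3 * x ^ 2 + 2 * x * y x + 2 * a * (y x) ^ 2 + 2 * a * (y x) ^ 3)
          / (x ^ 2 + 4 * a * x * y x + 6 * a * x * (y x) ^ 2
              + 4 * a ^ 2 * (y x) ^ 3)) x ∧
      (5 * x + 6 * x ^ 2 + 4 * (1 + a) * x * y x + a * (y x) ^ 2 ≠ 0 →
        -(2 * x + 3 * x ^ 2 + 2 * x * y x + 2 * a * (y x) ^ 2 + 2 * a * (y x) ^ 3)
            / (x ^ 2 + 4 * a * x * y x + 6 * a * x * (y x) ^ 2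
                + 4 * a ^ 2 * (y x) ^ 3)
          = (x + 2 * y x + 4 * x * y x + (2 + 3 * a) * (y x) ^ 2)
            / (5 * x + 6 * x ^ 2 + 4 * (1 + a) * x * y x + a * (y x) ^ 2)) :=
  stmt_17_general a J hJ y hdiff hcurve hden
end
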